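/- arXiv:1910.12986 — 2 statements merged into one kernel-verified Lean document; each statement's English description precedes it below -/
import Mathlib

section
/- Let A be the ring of integers of a local field, t ∈ m_A nonzero, Γ a profinite group, and M a finitely generated A-module with continuous Γ-action. Then the continuous cohomology H^i(Γ, M) is a finitely generated A-module if and only if H^i(Γ, M)/(t) is finite. -/
section ContinuousCohomology

variable (A : Type) [CommRing A] (Γ : Type) [Group Γ] [TopologicalSpace Γ]
  (M : Type) [AddCommGroup M] [Module A M] [TopologicalSpace M] [ContinuousAdd M]
  [ContinuousConstSMul A M] [DistribMulAction Γ M] [SMulCommClass Γ A M]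

/-- The inhomogeneous cochain differential on (not necessarily continuous) cochains,
as an `A`-linear map. -/
noncomputable def cochainD (n : ℕ) : ((Fin n → Γ) → M) →ₗ[A] ((Fin (n + 1) → Γ) → M) :=
  LinearMap.pi fun g =>
    (DistribMulAction.toLinearMap A M (g 0)).comp
        (LinearMap.proj fun i : Fin n => g i.succ)
      + ∑ j : Fin n, ((-1 : ℤ) ^ ((j : ℕ) + 1)) •
          LinearMap.proj (R := A) (φ := fun _ : Fin n → Γ => M)
            (fun i : Fin n =>
              if (i : ℕ) < (j : ℕ) then g i.castSucc
              else if i = j then g i.castSucc * g i.succ else g i.succ)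
      + ((-1 : ℤ) ^ (n + 1)) •
          LinearMap.proj (R := A) (φ := fun _ : Fin n → Γ => M)
            (fun i : Fin n => g i.castSucc)

/-- The submodule of continuous cochains. -/
def contCochains (n : ℕ) : Submodule A ((Fin n → Γ) → M) where
  carrier := {f | Continuous f}
  add_mem' := fun hf hg => hf.add hg
  zero_mem' := continuous_const
  smul_mem' := fun a _ hf => hf.const_smul a

/-- Continuous cocycles. -/
noncomputable def contCocycles (n : ℕ) : Submodule A ((Fin n → Γ) → M) :=
  contCochains A Γ M n ⊓ LinearMap.ker (cochainD A Γ M n)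

/-- Coboundaries of continuous cochains. -/
noncomputable def contCoboundaries : (n : ℕ) → Submodule A ((Fin n → Γ) → M)
  | 0 => ⊥
  | (n + 1) => Submodule.map (cochainD A Γ M n) (contCochains A Γ M n)

/-- Continuous (cochain) group cohomology `H^n(Γ, M)`, an `A`-module. -/
noncomputable abbrev ContinuousCohomology (n : ℕ) :=
  contCocycles A Γ M n ⧸
    (Submodule.comap (contCocycles A Γ M n).subtype (contCoboundaries A Γ M n))

end ContinuousCohomology

/-!
If `H = Hⁱ(Γ, M)` satisfies `H/tH` finite, choose classes `eⱼ` lifting its elements. Every class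
`h` expands as `h = ∑ⱼ a₀ⱼ eⱼ + t h₁`, `h₁ = ∑ⱼ a₁ⱼ eⱼ + t h₂`, …, and on representing cocycles
`z₀ = ∑_{k<K} tᵏ (∑ⱼ aₖⱼ eⱼ + bₖ) + tᴷ z_K` with coboundaries `bₖ = d cₖ`. Completeness of `A`
and `M` makes the coefficient series `∑ tᵏ aₖⱼ` converge to some `αⱼ ∈ A`, and the series
`∑ tᵏ cₖ` converges to a cochain `c` that is again continuous, because `M` carries the `t`-adic
topology. Since `M` is `t`-adically separated, `z₀ - ∑ⱼ αⱼ eⱼ` is then exactly `d c`.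
The argument runs on cochains because `H` itself is not known to be `t`-adically separated.
-/

open Finset
open scoped Pointwise

section AdicSeries

variable {R M N : Type*} [CommRing R] [AddCommGroup M] [Module R M] [AddCommGroup N] [Module R N]

theorem mem_span_singleton_pow_smul_top_iff {t : R} {K : ℕ} {x : M} :
    x ∈ Ideal.span {t} ^ K • (⊤ : Submodule R M) ↔ ∃ y, t ^ K • y = x := by
  simp [Ideal.span_singleton_pow, Submodule.ideal_span_singleton_smul,
    Submodule.mem_smul_pointwise_iff_exists]

theorem pow_smul_mem_span_singleton_pow_smul_top (t : R) (K : ℕ) (y : M) :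
    t ^ K • y ∈ Ideal.span {t} ^ K • (⊤ : Submodule R M) :=
  mem_span_singleton_pow_smul_top_iff.2 ⟨y, rfl⟩

theorem SModEq.smul_right {I : Ideal R} {r s : R} (h : r ≡ s [SMOD I • (⊤ : Submodule R R)])
    (m : M) : r • m ≡ s • m [SMOD I • (⊤ : Submodule R M)] := by
  rw [SModEq.sub_mem, ← sub_smul] at *
  exact Submodule.smul_mem_smul (by simpa using h) Submodule.mem_top

theorem SModEq.map_smul_top {I : Ideal R} {x y : M} (h : x ≡ y [SMOD I • (⊤ : Submodule R M)])
    (f : M →ₗ[R] N) : f x ≡ f y [SMOD I • (⊤ : Submodule R N)] :=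
  (h.map f).mono <| by
    rw [Submodule.map_smul'']
    exact Submodule.smul_mono le_rfl le_top

theorem eq_sum_pow_smul_add_pow_smul {t : R} {z w : ℕ → M}
    (h : ∀ k, z k = w k + t • z (k + 1)) (K : ℕ) :
    z 0 = ∑ k ∈ range K, t ^ k • w k + t ^ K • z K := by
  induction K with
  | zero => simp
  | succ K ih =>
    rw [ih, h K, sum_range_succ, smul_add, smul_smul, ← pow_succ]
    abel

theorem isPrecomplete_iff_exists_sModEq_sum {I : Ideal R} :
    IsPrecomplete I M ↔ ∀ a : ℕ → M, (∀ k, a k ∈ I ^ k • (⊤ : Submodule R M)) →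
      ∃ L, ∀ K, ∑ k ∈ range K, a k ≡ L [SMOD I ^ K • (⊤ : Submodule R M)] := by
  refine ⟨fun h a ha => h.prec fun {m n} hmn => ?_, fun h => ⟨fun {f} hf => ?_⟩⟩
  · rw [SModEq.sub_mem, ← neg_sub, ← sum_Ico_eq_sub _ hmn]
    exact Submodule.neg_mem _ <| Submodule.sum_mem _ fun k hk =>
      Submodule.smul_mono_left (Ideal.pow_le_pow_right (mem_Ico.1 hk).1) (ha k)
  · have ha : ∀ k, f (k + 1) - f k ∈ I ^ k • (⊤ : Submodule R M) := fun k => by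
      rw [← neg_sub]
      exact Submodule.neg_mem _ (SModEq.sub_mem.1 (hf k.le_succ))
    obtain ⟨L, hL⟩ := h _ ha
    refine ⟨f 0 + L, fun K => ?_⟩
    rw [← add_sub_cancel (f 0) (f K), ← sum_range_sub]
    exact SModEq.rfl.add (hL K)

theorem IsPrecomplete.pow {I : Ideal R} (h : IsPrecomplete I M) (v : ℕ) :
    IsPrecomplete (I ^ v) M := by
  rcases v.eq_zero_or_pos with rfl | hv
  · rw [pow_zero, Ideal.one_eq_top]
    infer_instance
  refine ⟨fun {f} hf => ?_⟩
  have hle : ∀ n, (I ^ v) ^ n • (⊤ : Submodule R M) ≤ I ^ n • ⊤ := fun n =>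
    Submodule.smul_mono_left <| by
      rw [← pow_mul]
      exact Ideal.pow_le_pow_right (Nat.le_mul_of_pos_left n hv)
  obtain ⟨L, hL⟩ := h.prec fun hmn => (hf hmn).mono (hle _)
  refine ⟨L, fun n => (hf (Nat.le_mul_of_pos_left n hv)).trans ?_⟩
  rw [← pow_mul]
  exact hL (v * n)

theorem IsPrecomplete.of_finite {I : Ideal R} [IsPrecomplete I R] [Module.Finite R M] :
    IsPrecomplete I M := by
  obtain ⟨n, s, hs⟩ := Module.Finite.exists_fin (R := R) (M := M)
  refine isPrecomplete_iff_exists_sModEq_sum.2 fun a ha => ?_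
  have hcoeff : ∀ k, ∃ c : Fin n → R, (∀ j, c j ∈ I ^ k) ∧ ∑ j, c j • s j = a k := by
    intro k
    have hak := ha k
    rw [← hs, Submodule.mem_ideal_smul_span_iff_exists_sum] at hak
    obtain ⟨c, hc, hca⟩ := hak
    exact ⟨c, hc, by simp [← hca, Finsupp.sum_fintype]⟩
  choose c hcI hca using hcoeff
  choose L hL using fun j => isPrecomplete_iff_exists_sModEq_sum.1 ‹IsPrecomplete I R›
    (fun k => c k j) fun k => by simpa using hcI k j
  refine ⟨∑ j, L j • s j, fun K => ?_⟩
  simp_rw [← hca]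
  rw [sum_comm]
  simp_rw [← sum_smul]
  exact SModEq.sum fun j _ => (hL j K).smul_right (s j)

theorem IsHausdorff.pi {I : Ideal R} {ι : Type*} {φ : ι → Type*} [∀ i, AddCommGroup (φ i)]
    [∀ i, Module R (φ i)] (h : ∀ i, IsHausdorff I (φ i)) : IsHausdorff I (∀ i, φ i) :=
  ⟨fun x hx => _root_.funext fun i => (h i).haus (x i) fun n => by
    simpa using (hx n).map_smul_top (LinearMap.proj i)⟩

end AdicSeries

section AdicSums

variable {R M N : Type*} [CommRing R] [AddCommGroup M] [Module R M] [AddCommGroup N] [Module R N]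

def Submodule.HasAdicSums (t : R) (P : Submodule R M) : Prop :=
  ∀ c : ℕ → M, (∀ k, c k ∈ P) → ∃ s ∈ P, ∀ K,
    ∑ k ∈ range K, t ^ k • c k ≡ s [SMOD Ideal.span {t} ^ K • (⊤ : Submodule R M)]

theorem Submodule.hasAdicSums_bot (t : R) : (⊥ : Submodule R M).HasAdicSums t := fun c hc =>
  ⟨0, Submodule.zero_mem _, fun K => by simp [(Submodule.mem_bot R).1 (hc _)]⟩

theorem Submodule.HasAdicSums.map {t : R} {P : Submodule R M} (h : P.HasAdicSums t)
    (f : M →ₗ[R] N) : (P.map f).HasAdicSums t := by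
  intro c hc
  choose d hdP hdc using fun k => Submodule.mem_map.1 (hc k)
  obtain ⟨s, hsP, hs⟩ := h d hdP
  refine ⟨f s, Submodule.mem_map_of_mem hsP, fun K => ?_⟩
  simpa [map_sum, hdc] using (hs K).map_smul_top f

end AdicSums

section AdicTopology

variable {R M : Type*} [CommRing R] [AddCommGroup M] [Module R M] [TopologicalSpace M] {t : R}

theorem isOpen_setOf_sModEq
    (hadic : ∀ s : Set M, IsOpen s ↔ ∀ m ∈ s, ∃ n : ℕ,
      {y : M | y - m ∈ (Ideal.span {t} ^ n) • (⊤ : Submodule R M)} ⊆ s) (m : M) (n : ℕ) :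
    IsOpen {y : M | y ≡ m [SMOD Ideal.span {t} ^ n • (⊤ : Submodule R M)]} := by
  refine (hadic _).2 fun m' hm' => ⟨n, fun y hy => ?_⟩
  exact (SModEq.sub_mem.2 hy).trans hm'

theorem continuous_of_forall_sModEq {X : Type*} [TopologicalSpace X]
    (hadic : ∀ s : Set M, IsOpen s ↔ ∀ m ∈ s, ∃ n : ℕ,
      {y : M | y - m ∈ (Ideal.span {t} ^ n) • (⊤ : Submodule R M)} ⊆ s)
    {g : ℕ → X → M} (hg : ∀ n, Continuous (g n)) {f : X → M}
    (hgf : ∀ n x, g n x ≡ f x [SMOD Ideal.span {t} ^ n • (⊤ : Submodule R M)]) :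
    Continuous f := by
  refine continuous_def.2 fun s hs => isOpen_iff_forall_mem_open.2 fun x₀ hx₀ => ?_
  obtain ⟨n, hn⟩ := (hadic s).1 hs (f x₀) hx₀
  refine ⟨g n ⁻¹' {y | y ≡ g n x₀ [SMOD Ideal.span {t} ^ n • ⊤]}, fun x hx => hn ?_,
    (hg n).isOpen_preimage _ (isOpen_setOf_sModEq hadic _ n), SModEq.rfl⟩
  exact SModEq.sub_mem.1 (((hgf n x).symm.trans hx).trans (hgf n x₀))

theorem exists_continuous_sModEq_sum [ContinuousAdd M] [ContinuousConstSMul R M]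
    {X : Type*} [TopologicalSpace X]
    (hadic : ∀ s : Set M, IsOpen s ↔ ∀ m ∈ s, ∃ n : ℕ,
      {y : M | y - m ∈ (Ideal.span {t} ^ n) • (⊤ : Submodule R M)} ⊆ s)
    [hM : IsPrecomplete (Ideal.span {t}) M] (c : ℕ → X → M) (hc : ∀ k, Continuous (c k)) :
    ∃ f : X → M, Continuous f ∧ ∀ K, ∑ k ∈ range K, t ^ k • c k ≡ f
      [SMOD Ideal.span {t} ^ K • (⊤ : Submodule R (X → M))] := by
  choose f hf using fun x => isPrecomplete_iff_exists_sModEq_sum.1 hM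
    (fun k => t ^ k • c k x) fun k => pow_smul_mem_span_singleton_pow_smul_top t k _
  refine ⟨f, continuous_of_forall_sModEq hadic (g := fun K x => ∑ k ∈ range K, t ^ k • c k x)
    (fun K => ?_) (fun K x => ?_), fun K => ?_⟩
  · exact continuous_finsetSum _ fun k _ => (hc k).const_smul (t ^ k)
  · simpa using hf x K
  · choose y hy using fun x => mem_span_singleton_pow_smul_top_iff.1 (SModEq.sub_mem.1 (hf x K))
    refine SModEq.sub_mem.2 (mem_span_singleton_pow_smul_top_iff.2 ⟨y, _root_.funext fun x => ?_⟩)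
    simpa using hy x

end AdicTopology

section CompleteNakayama

variable {R F : Type*} [CommRing R] [AddCommGroup F] [Module R F] {t : R}
  [IsPrecomplete (Ideal.span {t}) R] [IsHausdorff (Ideal.span {t}) F]

theorem exists_sub_sum_smul_mem_of_hasAdicSums {B : Submodule R F} (hB : B.HasAdicSums t)
    {ι : Type*} [Fintype ι] (e : ι → F) (a : ℕ → ι → R) (z : ℕ → F)
    (hz : ∀ k, z k - (∑ j, a k j • e j + t • z (k + 1)) ∈ B) :
    ∃ α : ι → R, z 0 - ∑ j, α j • e j ∈ B := by
  set b := fun k => z k - (∑ j, a k j • e j + t • z (k + 1))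
  choose α hα using fun j => isPrecomplete_iff_exists_sModEq_sum.1 ‹_›
    (fun k => t ^ k • a k j) fun k => pow_smul_mem_span_singleton_pow_smul_top t k _
  obtain ⟨b', hb'B, hb'⟩ := hB b hz
  refine ⟨α, ?_⟩
  suffices z 0 = ∑ j, α j • e j + b' by rwa [this, add_sub_cancel_left]
  refine (IsHausdorff.eq_iff_smodEq (I := Ideal.span {t})).2 fun K => ?_
  have hstep : ∀ k, z k = (∑ j, a k j • e j + b k) + t • z (k + 1) := fun k => by
    simp only [b]
    abel
  have hsplit : ∑ k ∈ range K, t ^ k • (∑ j, a k j • e j + b k) =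
      ∑ j, (∑ k ∈ range K, t ^ k • a k j) • e j + ∑ k ∈ range K, t ^ k • b k := by
    simp only [smul_add, sum_add_distrib, smul_sum, sum_smul, smul_smul, smul_eq_mul]
    rw [sum_comm]
  rw [eq_sum_pow_smul_add_pow_smul hstep K, hsplit, ← add_zero (∑ j, α j • e j + b')]
  exact ((SModEq.sum fun j _ => (hα j K).smul_right (e j)).add (hb' K)).add
    (SModEq.zero.2 (pow_smul_mem_span_singleton_pow_smul_top t K _))

theorem span_range_eq_top_of_sup_smul_eq_top {Z B : Submodule R F} (hB : B.HasAdicSums t)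
    {ι : Type*} [Fintype ι] (e : ι → Z ⧸ B.comap Z.subtype)
    (he : Submodule.span R (Set.range e) ⊔ Ideal.span {t} • ⊤ = ⊤) :
    Submodule.span R (Set.range e) = ⊤ := by
  have hstep : ∀ h, ∃ p : (ι → R) × (Z ⧸ B.comap Z.subtype), h = ∑ j, p.1 j • e j + t • p.2 := by
    intro h
    have hh : h ∈ Submodule.span R (Set.range e) ⊔ Ideal.span {t} • ⊤ := by
      rw [he]
      exact Submodule.mem_top
    obtain ⟨x, hx, y, hy, rfl⟩ := Submodule.mem_sup.1 hh
    obtain ⟨a, rfl⟩ := (Submodule.mem_span_range_iff_exists_fun R).1 hx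
    rw [← pow_one (Ideal.span {t}), mem_span_singleton_pow_smul_top_iff] at hy
    obtain ⟨y', rfl⟩ := hy
    exact ⟨(a, y'), by simp⟩
  choose next hnext using hstep
  obtain ⟨lift, hlift⟩ := (B.comap Z.subtype).mkQ_surjective.hasRightInverse
  refine eq_top_iff.2 fun h _ => ?_
  set hs : ℕ → Z ⧸ B.comap Z.subtype := fun k => (fun x => (next x).2)^[k] h
  have hrec : ∀ k, lift (hs k) - (∑ j, (next (hs k)).1 j • lift (e j) + t • lift (hs (k + 1)))
      ∈ B.comap Z.subtype := fun k => by
    refine (Submodule.Quotient.mk_eq_zero _).1 ?_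
    simp only [← Submodule.mkQ_apply, map_sub, map_add, map_sum, map_smul, hlift _, hs,
      Function.iterate_succ_apply']
    exact sub_eq_zero.2 (hnext _)
  obtain ⟨α, hα⟩ := exists_sub_sum_smul_mem_of_hasAdicSums hB (fun j => (lift (e j) : F))
    (fun k => (next (hs k)).1) (fun k => (lift (hs k) : F)) fun k => by simpa using hrec k
  have hmem : lift h - ∑ j, α j • lift (e j) ∈ B.comap Z.subtype := by simpa [hs] using hα
  replace hmem := (Submodule.Quotient.mk_eq_zero _).2 hmem
  simp only [← Submodule.mkQ_apply, map_sub, map_sum, map_smul, hlift _, sub_eq_zero] at hmem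
  rw [hmem]
  exact Submodule.sum_mem _ fun j _ => Submodule.smul_mem _ _ (Submodule.subset_span ⟨j, rfl⟩)

theorem moduleFinite_quotient_of_finite_quotient_smul {Z B : Submodule R F}
    (hB : B.HasAdicSums t) [Finite ((Z ⧸ B.comap Z.subtype) ⧸
      Ideal.span {t} • (⊤ : Submodule R (Z ⧸ B.comap Z.subtype)))] :
    Module.Finite R (Z ⧸ B.comap Z.subtype) := by
  set N := Ideal.span {t} • (⊤ : Submodule R (Z ⧸ B.comap Z.subtype))
  have := Fintype.ofFinite (_ ⧸ N)
  obtain ⟨σ, hσ⟩ := N.mkQ_surjective.hasRightInverse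
  have hsup : Submodule.span R (Set.range σ) ⊔ N = ⊤ := by
    refine eq_top_iff.2 fun x _ => Submodule.mem_sup.2 ⟨σ (N.mkQ x),
      Submodule.subset_span ⟨_, rfl⟩, x - σ (N.mkQ x), ?_, add_sub_cancel _ _⟩
    rw [← Submodule.Quotient.mk_eq_zero, Submodule.Quotient.mk_sub, ← Submodule.mkQ_apply,
      ← Submodule.mkQ_apply, hσ, sub_self]
  exact .of_fg_top (Submodule.fg_def.2
    ⟨_, Set.finite_range σ, span_range_eq_top_of_sup_smul_eq_top hB σ hsup⟩)

end CompleteNakayama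

section ContinuousCohomology

variable {A : Type} [CommRing A] {Γ : Type} [TopologicalSpace Γ]
  {M : Type} [AddCommGroup M] [Module A M] [TopologicalSpace M] [ContinuousAdd M]
  [ContinuousConstSMul A M] {t : A} [IsPrecomplete (Ideal.span {t}) M]

theorem hasAdicSums_contCochains
    (hadic : ∀ s : Set M, IsOpen s ↔ ∀ m ∈ s, ∃ n : ℕ,
      {y : M | y - m ∈ (Ideal.span {t} ^ n) • (⊤ : Submodule A M)} ⊆ s) (n : ℕ) :
    (contCochains A Γ M n).HasAdicSums t := fun c hc =>
  exists_continuous_sModEq_sum hadic c hc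

theorem hasAdicSums_contCoboundaries [Group Γ] [DistribMulAction Γ M] [SMulCommClass Γ A M]
    (hadic : ∀ s : Set M, IsOpen s ↔ ∀ m ∈ s, ∃ n : ℕ,
      {y : M | y - m ∈ (Ideal.span {t} ^ n) • (⊤ : Submodule A M)} ⊆ s) :
    ∀ n, (contCoboundaries A Γ M n).HasAdicSums t
  | 0 => Submodule.hasAdicSums_bot t
  | n + 1 => (hasAdicSums_contCochains hadic n).map (cochainD A Γ M n)

end ContinuousCohomology

theorem finite_continuousCohomology_iff_finite_mod_t_general
    (A : Type) [CommRing A] [IsDomain A] [IsDiscreteValuationRing A]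
    [IsAdicComplete (IsLocalRing.maximalIdeal A) A] [Finite (IsLocalRing.ResidueField A)]
    (t : A) (ht0 : t ≠ 0) (ht : t ∈ IsLocalRing.maximalIdeal A)
    (Γ : Type) [Group Γ] [TopologicalSpace Γ]
    (M : Type) [AddCommGroup M] [Module A M] [Module.Finite A M]
    [TopologicalSpace M] [ContinuousAdd M] [ContinuousConstSMul A M]
    [DistribMulAction Γ M] [SMulCommClass Γ A M]
    (hadic : ∀ s : Set M, IsOpen s ↔ ∀ m ∈ s, ∃ n : ℕ,
      {y : M | y - m ∈ (Ideal.span {t} ^ n) • (⊤ : Submodule A M)} ⊆ s)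
    (i : ℕ) :
    Module.Finite A (ContinuousCohomology A Γ M i) ↔
      Finite ((ContinuousCohomology A Γ M i) ⧸
        ((Ideal.span {t}) • (⊤ : Submodule A (ContinuousCohomology A Γ M i)))) := by
  obtain ⟨v, hv⟩ := exists_maximalIdeal_pow_eq_of_principal A
    (IsPrincipalIdealRing.principal _) (Ideal.span {t}) (by simpa using ht0)
  constructor
  · intro
    have : Finite (A ⧸ Ideal.span {t}) := IsLocalRing.finite_quotient_iff.2 ⟨v, hv.ge⟩
    exact Submodule.finite_quotient_smul _ Module.Finite.fg_top
  · intro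
    have : IsPrecomplete (Ideal.span {t}) A := hv ▸ IsPrecomplete.pow inferInstance v
    have : IsPrecomplete (Ideal.span {t}) M := .of_finite
    have := IsHausdorff.pi fun _ : Fin i → Γ => IsHausdorff.of_isLocalRing (Ideal.span {t}) M
      (Ideal.span_singleton_ne_top ((IsLocalRing.mem_maximalIdeal t).1 ht))
    exact moduleFinite_quotient_of_finite_quotient_smul (hasAdicSums_contCoboundaries hadic i)

/-- **Finite generation of continuous cohomology is detected mod `t`.**
Let `A` be the ring of integers of a local field (a complete discrete valuation ring with
finite residue field), `t ∈ 𝔪_A` nonzero, `Γ` a profinite group, and `M` a finitely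
generated `A`-module with its adic topology and a continuous `A`-linear `Γ`-action.
Then the continuous cohomology `H^i(Γ, M)` is a finitely generated `A`-module if and only
if `H^i(Γ, M)/(t)` is finite. -/
theorem finite_continuousCohomology_iff_finite_mod_t
    (A : Type) [CommRing A] [IsDomain A] [IsDiscreteValuationRing A]
    [IsAdicComplete (IsLocalRing.maximalIdeal A) A] [Finite (IsLocalRing.ResidueField A)]
    (t : A) (ht0 : t ≠ 0) (ht : t ∈ IsLocalRing.maximalIdeal A)
    (Γ : Type) [Group Γ] [TopologicalSpace Γ] [IsTopologicalGroup Γ]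
    [CompactSpace Γ] [T2Space Γ] [TotallyDisconnectedSpace Γ]
    (M : Type) [AddCommGroup M] [Module A M] [Module.Finite A M]
    [TopologicalSpace M] [ContinuousAdd M] [ContinuousConstSMul A M]
    [DistribMulAction Γ M] [SMulCommClass Γ A M] [ContinuousSMul Γ M]
    (hadic : ∀ s : Set M, IsOpen s ↔ ∀ m ∈ s, ∃ n : ℕ,
      {y : M | y - m ∈ (Ideal.span {t} ^ n) • (⊤ : Submodule A M)} ⊆ s)
    (i : ℕ) :
    Module.Finite A (ContinuousCohomology A Γ M i) ↔
      Finite ((ContinuousCohomology A Γ M i) ⧸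
        ((Ideal.span {t}) • (⊤ : Submodule A (ContinuousCohomology A Γ M i)))) :=
  finite_continuousCohomology_iff_finite_mod_t_general A t ht0 ht Γ M hadic i
end

section
/- Let K be an imaginary CM field with complex conjugation c, n ≥ 2 an integer, and a ∈ K. Let L/K be the splitting field of x^n − a/a^c. Then L/K is a soluble CM extension and there exists z in the maximal totally real subfield L^+ of L such that a ≡ z modulo n-th powers in L^×. -/
/-!
Every root `β` of `X ^ n - a / c(a)` has absolute value one under every complex embedding,
since `|a / c(a)| = 1` there. Hence, starting from any embedding `φ₀ : L → ℂ`, complex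
conjugation maps the generators `K ∪ {β}` of `φ₀(L)` back into `φ₀(L)` and pulls back to an
involution `σ` of `L`; the same generators show that `σ` is complex conjugation under every
embedding. Its fixed field is totally real of index two. As `σ β = β⁻¹`, Hilbert 90 for `⟨σ⟩`
writes `β = b / σ(b)`, and then `z = a σ(b) ^ n` is fixed by `σ` and `a = z (σ(b)⁻¹) ^ n`.
-/

open NumberField ComplexEmbedding InfinitePlace IntermediateField Polynomial

theorem Algebra.field_closure_range_union_eq_top {K L : Type*} [Field K] [Field L] [Algebra K L]
    {S : Set L} (hS : Algebra.adjoin K S = ⊤) :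
    Subfield.closure (Set.range (algebraMap K L) ∪ S) = ⊤ := by
  rw [_root_.eq_top_iff]
  intro x _
  have hx : x ∈ (Algebra.adjoin K S).toSubring := by simp [hS]
  rw [Algebra.adjoin_eq_ring_closure] at hx
  exact (Subring.closure_le.mpr Subfield.subset_closure :
    Subring.closure _ ≤ (Subfield.closure _).toSubring) hx

section XPowSubC

variable {K L : Type*} [Field K] [Field L] [Algebra K L] {n : ℕ} {d : K}

theorem Polynomial.pow_eq_of_mem_rootSet_X_pow_sub_C {x : L}
    (hx : x ∈ (X ^ n - C d).rootSet L) : x ^ n = algebraMap K L d := by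
  rw [mem_rootSet, map_sub, map_pow, aeval_X, aeval_C, sub_eq_zero] at hx
  exact hx.2

theorem Polynomial.IsSplittingField.exists_pow_eq_X_pow_sub_C (hn : n ≠ 0)
    [IsSplittingField K L (X ^ n - C d)] :
    ∃ x : L, x ^ n = algebraMap K L d := by
  obtain ⟨x, hx⟩ := (IsSplittingField.splits L (X ^ n - C d)).exists_eval_eq_zero (by
    rw [degree_map, degree_X_pow_sub_C (Nat.pos_of_ne_zero hn)]
    exact_mod_cast hn)
  refine ⟨x, ?_⟩
  simpa [sub_eq_zero] using hx

theorem Polynomial.IsSplittingField.isSolvable_X_pow_sub_C (n : ℕ) (d : K)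
    [IsSplittingField K L (X ^ n - C d)] : Group.IsSolvable (L ≃ₐ[K] L) :=
  @Group.isSolvable_of_surjective _ _ _ _
    (AlgEquiv.autCongr (IsSplittingField.algEquiv L (X ^ n - C d))).symm.toMonoidHom
    (MulEquiv.surjective _) (gal_X_pow_sub_C_isSolvable n d)

end XPowSubC

section Involution

variable {k L : Type*} [Field k] [Field L] [Algebra k L] {σ : L ≃ₐ[k] L}

/-- Hilbert's Theorem 90 for an automorphism of order two. -/
theorem AlgEquiv.exists_div_apply_eq_of_involutive (hσσ : ∀ x, σ (σ x) = x) (hσ : σ ≠ 1)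
    {β : L} (hβ0 : β ≠ 0) (hβ : σ β = β⁻¹) : ∃ b : L, b ≠ 0 ∧ b / σ b = β := by
  obtain ⟨t, ht⟩ : ∃ t : L, t + β * σ t ≠ 0 := by
    by_contra! h
    have hβ1 : β = -1 := by linear_combination (by simpa using h 1 : 1 + β = 0)
    exact hσ <| AlgEquiv.ext fun t ↦ by
      rw [AlgEquiv.one_apply]
      linear_combination -(h t) + σ t * hβ1
  refine ⟨t + β * σ t, ht, ?_⟩
  have : σ (t + β * σ t) = β⁻¹ * (t + β * σ t) := by
    rw [map_add, map_mul, hσσ, hβ]; field_simp; ring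
  rw [this, div_eq_iff (mul_ne_zero (inv_ne_zero hβ0) ht)]
  field_simp

theorem AlgEquiv.exists_apply_eq_self_eq_mul_pow (hσσ : ∀ x, σ (σ x) = x) (hσ : σ ≠ 1)
    {n : ℕ} (hn : n ≠ 0) {x β : L} (hβn : β ^ n = x / σ x) (hβ : σ β = β⁻¹) :
    ∃ z w : L, σ z = z ∧ x = z * w ^ n := by
  rcases eq_or_ne x 0 with rfl | hx
  · exact ⟨0, 0, map_zero σ, (zero_mul _).symm⟩
  have hσx : σ x ≠ 0 := (map_ne_zero σ).mpr hx
  have hβ0 : β ≠ 0 := fun h ↦ div_ne_zero hx hσx (by rw [← hβn, h, zero_pow hn])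
  obtain ⟨b, hb, hbβ⟩ := exists_div_apply_eq_of_involutive hσσ hσ hβ0 hβ
  have hσb : σ b ≠ 0 := (map_ne_zero σ).mpr hb
  have hbn : b ^ n = x / σ x * σ b ^ n := by
    rw [← hβn, ← mul_pow, ← hbβ, div_mul_cancel₀ _ hσb]
  refine ⟨x * σ b ^ n, (σ b)⁻¹, ?_, ?_⟩
  · rw [map_mul, map_pow, hσσ, hbn]
    field_simp
  · rw [inv_pow, mul_assoc, mul_inv_cancel₀ (pow_ne_zero n hσb), mul_one]

end Involution

section

open scoped ComplexConjugate

theorem Complex.conj_eq_inv_of_pow_eq_div_conj {n : ℕ} (hn : n ≠ 0) {z w : ℂ}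
    (h : z ^ n = w / conj w) : conj z = z⁻¹ := by
  rcases eq_or_ne w 0 with rfl | hw
  · rw [map_zero, div_zero, pow_eq_zero_iff hn] at h
    simp [h]
  have hnorm : ‖z‖ ^ n = 1 := by
    rw [← norm_pow, h, norm_div, Complex.norm_conj, div_self (norm_ne_zero_iff.mpr hw)]
  exact (Complex.inv_eq_conj <| (pow_eq_one_iff_of_nonneg (norm_nonneg z) hn).mp hnorm).symm

namespace NumberField.ComplexEmbedding

theorem IsConj.apply_eq_of_conj_eq {k K : Type*} [Field k] [Field K] [Algebra k K]
    {φ : K →+* ℂ} {σ : Gal(K/k)} (hσ : IsConj φ σ) {x y : K} (h : conj (φ x) = φ y) :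
    σ x = y :=
  φ.injective <| (hσ.eq x).trans h

theorem isConj_of_ne_one {k K : Type*} [Field k] [Field K] [NumberField k] [NumberField K]
    [Algebra k K] [IsTotallyReal k] [IsTotallyComplex K] [Algebra.IsQuadraticExtension k K]
    {σ : Gal(K/k)} (hσ : σ ≠ 1) (φ : K →+* ℂ) : IsConj φ σ := by
  have hcard : Nat.card Gal(K/k) = 2 :=
    Algebra.IsQuadraticExtension.finrank_eq_two k K ▸ IsGalois.card_aut_eq_finrank k K
  obtain ⟨τ, hτ⟩ := exists_isConj_of_isRamified (k := k) (φ := φ) <|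
    isRamified_iff.mpr ⟨IsTotallyComplex.isComplex _, IsTotallyReal.isReal _⟩
  rw [Nat.card_eq_two_iff' 1] at hcard
  rwa [hcard.unique hσ ((isConj_ne_one_iff hτ).mpr
    (IsTotallyComplex.complexEmbedding_not_isReal φ))]

theorem exists_isConj_of_fieldRange_le {L : Type*} [Field L] [CharZero L] {φ : L →+* ℂ}
    (hφ : (conjugate φ).fieldRange ≤ φ.fieldRange) : ∃ σ : Gal(L/ℚ), IsConj φ σ := by
  let g : L →+* L := (φ.rangeRestrictFieldEquiv.symm : φ.fieldRange →+* L).comp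
    ((conjugate φ).codRestrict φ.fieldRange fun x ↦ hφ ⟨x, rfl⟩)
  have hg : ∀ x, φ (g x) = conj (φ x) := fun x ↦
    φ.rangeRestrictFieldEquiv_apply_symm_apply _
  have hgg : g.comp g = RingHom.id L := RingHom.ext fun x ↦ φ.injective <| by simp [hg]
  exact ⟨(RingEquiv.ofRingHom g g hgg hgg).toRatAlgEquiv, RingHom.ext fun x ↦ (hg x).symm⟩

theorem exists_forall_isConj_of_field_closure_eq_top {L : Type*} [Field L] [NumberField L]
    {T : Set L} (hT : Subfield.closure T = ⊤)
    (hconj : ∀ x ∈ T, ∃ y, ∀ φ : L →+* ℂ, conj (φ x) = φ y) :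
    ∃ σ : Gal(L/ℚ), ∀ φ : L →+* ℂ, IsConj φ σ := by
  choose! τ hτ using hconj
  let φ₀ : L →+* ℂ := Classical.arbitrary _
  have hrange : (conjugate φ₀).fieldRange ≤ φ₀.fieldRange := by
    rintro _ ⟨x, rfl⟩
    have hT' : T ⊆ φ₀.fieldRange.comap (conjugate φ₀) := fun x hx ↦
      ⟨τ x, (hτ x hx φ₀).symm⟩
    exact Subfield.closure_le.mpr hT' (hT ▸ Subfield.mem_top x)
  obtain ⟨σ, hσ⟩ := exists_isConj_of_fieldRange_le hrange
  refine ⟨σ, fun φ ↦ RingHom.eq_of_eqOn_of_field_closure_eq_top hT fun x hx ↦ ?_⟩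
  change conj (φ x) = φ (σ x)
  rw [hσ.apply_eq_of_conj_eq (hτ x hx φ₀), hτ x hx φ]

section SplittingField

variable {k K L : Type*} [Field k] [Field K] [Field L] [Algebra k K] [Algebra K L]
  {c : Gal(K/k)} {n : ℕ}

theorem conj_apply_eq_inv_of_pow_eq_div (hc : ∀ ψ : K →+* ℂ, IsConj ψ c) (hn : n ≠ 0)
    {a : K} {β : L} (hβ : β ^ n = algebraMap K L (a / c a)) (φ : L →+* ℂ) :
    conj (φ β) = (φ β)⁻¹ := by
  refine Complex.conj_eq_inv_of_pow_eq_div_conj hn (w := φ (algebraMap K L a)) ?_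
  rw [← map_pow, hβ, map_div₀, map_div₀]
  exact congrArg _ ((hc (φ.comp (algebraMap K L))).eq a)

theorem exists_forall_isConj_of_isSplittingField [NumberField L]
    (hc : ∀ ψ : K →+* ℂ, IsConj ψ c) (hn : n ≠ 0) (a : K)
    [IsSplittingField K L (X ^ n - C (a / c a))] :
    ∃ σ : Gal(L/ℚ), ∀ φ : L →+* ℂ, IsConj φ σ := by
  have hT := Algebra.field_closure_range_union_eq_top
    (IsSplittingField.adjoin_rootSet L (X ^ n - C (a / c a)))
  refine exists_forall_isConj_of_field_closure_eq_top hT ?_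
  rintro _ (⟨x, rfl⟩ | hβ)
  · exact ⟨algebraMap K L (c x), fun φ ↦ ((hc (φ.comp (algebraMap K L))).eq x).symm⟩
  · exact ⟨_, fun φ ↦ by rw [conj_apply_eq_inv_of_pow_eq_div hc hn
      (pow_eq_of_mem_rootSet_X_pow_sub_C hβ), map_inv₀]⟩

end SplittingField

section FixedField

variable {L : Type*} [Field L] [NumberField L] {σ : Gal(L/ℚ)}

theorem mem_fixedField_zpowers_iff {x : L} :
    x ∈ fixedField (Subgroup.zpowers σ) ↔ σ x = x := by
  refine ⟨fun hx ↦ (mem_fixedField_iff _ x).mp hx σ (Subgroup.mem_zpowers σ), fun hx ↦ ?_⟩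
  rw [mem_fixedField_iff]
  rintro _ ⟨k, rfl⟩
  exact MulAction.mem_fixedBy_zpow (g := σ) hx k

theorem isTotallyReal_fixedField_zpowers (hσ : ∀ φ : L →+* ℂ, IsConj φ σ) :
    IsTotallyReal (fixedField (Subgroup.zpowers σ)) where
  isReal w := by
    obtain ⟨W, rfl⟩ := w.comap_surjective (K := L)
    rw [← mk_embedding W]
    dsimp only
    rw [comap_mk, isReal_mk_iff]
    let σ' : Gal(L/fixedField (Subgroup.zpowers σ)) :=
      { σ with commutes' := fun x ↦ mem_fixedField_zpowers_iff.mp x.2 }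
    exact IsConj.isReal_comp (σ := σ') (hσ W.embedding)

theorem finrank_fixedField_zpowers {φ : L →+* ℂ} (hσ : IsConj φ σ) (hσ1 : σ ≠ 1) :
    Module.finrank (fixedField (Subgroup.zpowers σ)) L = 2 := by
  rw [finrank_fixedField_eq_card, Nat.card_zpowers, orderOf_isConj_two_of_ne_one hσ hσ1]

end FixedField

end NumberField.ComplexEmbedding

end

/-- **Making elements totally real up to `n`-th powers.**
Let `K` be an imaginary CM field with maximal totally real subfield `K⁺` and complex
conjugation `c` (the nontrivial `K⁺`-automorphism of `K`), let `n ≥ 2` and `a ∈ K`.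
Let `L` be the splitting field over `K` of `x^n - a/a^c`.  Then `L/K` is a soluble
(Galois) extension, `L` is a CM field, and there exists `z` in the maximal totally real
subfield `L⁺` of `L` with `a ≡ z mod (L^×)^n`. -/
theorem exists_totally_real_up_to_nth_powers
    (Kplus : Type) [Field Kplus] [NumberField Kplus]
    (K : Type) [Field K] [NumberField K] [Algebra Kplus K]
    (htr : ∀ v : InfinitePlace Kplus, v.IsReal)
    (him : ∀ v : InfinitePlace K, v.IsComplex)
    (hquad : Module.finrank Kplus K = 2)
    (conj : K ≃ₐ[Kplus] K) (hconj : conj ≠ AlgEquiv.refl)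
    (n : ℕ) (hn : 2 ≤ n) (a : K)
    (L : Type) [Field L] [Algebra K L]
    (hL : IsSplittingField K L (X ^ n - C (a / conj a))) :
    IsSolvable (L ≃ₐ[K] L) ∧
    (∀ v : InfinitePlace L, v.IsComplex) ∧
    ∃ F : Subfield L, (∀ w : InfinitePlace F, w.IsReal) ∧ Module.finrank F L = 2 ∧
      ∃ z ∈ F, ∃ w : L, algebraMap K L a = z * w ^ n := by
  have : IsTotallyReal Kplus := ⟨htr⟩
  have : IsTotallyComplex K := ⟨him⟩
  have : Algebra.IsQuadraticExtension Kplus K := ⟨hquad⟩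
  have hn0 : n ≠ 0 := by omega
  have hc : ∀ ψ : K →+* ℂ, IsConj ψ conj := isConj_of_ne_one hconj
  have := IsSplittingField.finiteDimensional L (X ^ n - C (a / conj a))
  have : NumberField L := .of_module_finite K L
  have : IsTotallyComplex L := isTotallyComplex_of_algebra K L
  obtain ⟨σ, hσ⟩ := exists_forall_isConj_of_isSplittingField hc hn0 a (L := L)
  let φ₀ : L →+* ℂ := Classical.arbitrary _
  have hσ1 : σ ≠ 1 :=
    (isConj_ne_one_iff (hσ φ₀)).mpr (IsTotallyComplex.complexEmbedding_not_isReal φ₀)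
  obtain ⟨β, hβ⟩ := IsSplittingField.exists_pow_eq_X_pow_sub_C (L := L) (d := a / conj a) hn0
  have hσa : σ (algebraMap K L a) = algebraMap K L (conj a) :=
    (hσ φ₀).apply_eq_of_conj_eq ((hc (φ₀.comp (algebraMap K L))).eq a).symm
  have hσβ : σ β = β⁻¹ := (hσ φ₀).apply_eq_of_conj_eq <| by
    rw [conj_apply_eq_inv_of_pow_eq_div hc hn0 hβ, map_inv₀]
  obtain ⟨z, w, hz, hzw⟩ := AlgEquiv.exists_apply_eq_self_eq_mul_pow
    (isConj_apply_apply (hσ φ₀)) hσ1 hn0 (by rw [hβ, map_div₀, hσa]) hσβ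
  have := isTotallyReal_fixedField_zpowers hσ
  exact ⟨IsSplittingField.isSolvable_X_pow_sub_C n (a / conj a), IsTotallyComplex.isComplex,
    (fixedField (Subgroup.zpowers σ)).toSubfield, IsTotallyReal.isReal,
    finrank_fixedField_zpowers (hσ φ₀) hσ1, z, mem_fixedField_zpowers_iff.mpr hz, w, hzw⟩
end
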